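/- arXiv:2502.15950 — 2 statements merged into one kernel-verified Lean document; each statement's English description precedes it below -/
import Mathlib

section
/- (Proposition 1, finite form.) Let X and Y be finite nonempty types, let D_1, …, D_k be probability distributions on X × Y, and let λ be in the (k−1)-simplex. Suppose p*_λ is a conditional model minimizing L(·, D_λ) over all conditional models, and for each i, p*_i is a conditional model minimizing L(·, D_i) over all conditional models. Then for every x with D_λ(x) > 0 and every y ∈ Y, p*_λ(y|x) = Σ_{i : D_i(x) > 0} λ_i′(x) · p*_i(y|x), where λ_i′(x) = λ_i D_i(x) / Σ_{j=1}^k λ_j D_j(x); that is, the minimizer of the λ-weighted pre-training loss is, on the support of the mixture, the λ′(x)-weighted combination of the per-domain loss minimizers (data experts). -/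
/-!
A minimizer `p` of the cross-entropy `L(·, D)` over conditional models satisfies the first-order
condition along every direction that moves conditional mass from `y₂` to `y₁` at a fixed `x`,
which forces `D(x, y₁) / p(y₁|x) = D(x, y₂) / p(y₂|x)`. Summing over `y₂` gives
`p(y|x) · D(x) = D(x, y)`, i.e. `p(·|x) = D(·|x)` wherever `D(x) > 0`. Since marginals are linear
in `D`, applying this to `D_λ` and to each `D_i` expresses `p*_λ(y|x) = D_λ(x, y) / D_λ(x)` as the
`λ'(x)`-weighted average of the `p*_i(y|x) = D_i(x, y) / D_i(x)`.
-/

open Finset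

/-- The x-marginal of a distribution on `X × Y`. -/
noncomputable def marginal {X Y : Type*} [Fintype Y] (D : X × Y → ℝ) (x : X) : ℝ :=
  ∑ y, D (x, y)

/-- A conditional model: strictly positive, normalized over `y` for each `x`. -/
def IsCondModel {X Y : Type*} [Fintype Y] (p : X × Y → ℝ) : Prop :=
  (∀ q, 0 < p q) ∧ ∀ x : X, ∑ y, p (x, y) = 1

/-- Cross-entropy loss of a conditional model `p` under a distribution `D` on `X × Y`. -/
noncomputable def xentLoss {X Y : Type*} [Fintype X] [Fintype Y] (p D : X × Y → ℝ) : ℝ :=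
  -∑ q : X × Y, D q * Real.log (p q)

section Marginal

variable {X Y : Type*} [Fintype Y]

lemma marginal_sum_mul {ι : Type*} (s : Finset ι) (w : ι → ℝ) (D : ι → X × Y → ℝ) (x : X) :
    marginal (fun r => ∑ i ∈ s, w i * D i r) x = ∑ i ∈ s, w i * marginal (D i) x := by
  simp only [marginal, mul_sum]
  exact sum_comm

lemma marginal_nonneg {D : X × Y → ℝ} (hD : ∀ q, 0 ≤ D q) (x : X) : 0 ≤ marginal D x :=
  sum_nonneg fun y _ => hD (x, y)

end Marginal

namespace IsCondModel

variable {X Y : Type*} [Fintype Y] [DecidableEq X] [DecidableEq Y]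

def transfer (x : X) (y₁ y₂ : Y) : X × Y → ℝ :=
  Pi.single (x, y₁) 1 - Pi.single (x, y₂) 1

lemma add_smul_transfer {p : X × Y → ℝ} (hp : IsCondModel p) (x : X) (y₁ y₂ : Y) {t : ℝ}
    (ht : |t| < min (p (x, y₁)) (p (x, y₂))) : IsCondModel (p + t • transfer x y₁ y₂) := by
  obtain ⟨ht₁, ht₂⟩ := abs_lt.1 ht
  rw [neg_lt, lt_min_iff] at ht₁
  rw [lt_min_iff] at ht₂
  refine ⟨fun r => ?_, fun x' => ?_⟩
  · have := hp.1 r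
    simp only [transfer, Pi.add_apply, Pi.smul_apply, Pi.sub_apply, Pi.single_apply, smul_eq_mul]
    split_ifs <;> subst_vars <;> linarith
  · have : ∑ y, transfer x y₁ y₂ (x', y) = 0 := by
      by_cases hx : x' = x <;> simp [transfer, Pi.single_apply, hx]
    simp [sum_add_distrib, ← mul_sum, this, hp.2 x']

end IsCondModel

section Minimizer

variable {X Y : Type*} [Fintype X] [Fintype Y]

lemma hasDerivAt_xentLoss_add_smul {p : X × Y → ℝ} (hp : ∀ r, 0 < p r) (c D : X × Y → ℝ) :
    HasDerivAt (fun t : ℝ => xentLoss (p + t • c) D) (-∑ r, D r * c r / p r) 0 := by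
  refine (HasDerivAt.fun_sum fun r _ => ?_).neg
  have hlin : HasDerivAt (fun t : ℝ => p r + t * c r) (c r) 0 := by
    simpa using ((hasDerivAt_id (0 : ℝ)).mul_const (c r)).const_add (p r)
  simpa [mul_div_assoc] using (hlin.log (by simpa using (hp r).ne')).const_mul (D r)

variable {p D : X × Y → ℝ} (hp : IsCondModel p)
  (hmin : IsMinOn (xentLoss · D) {q | IsCondModel q} p)
include hp hmin

lemma div_eq_div_of_isMinOn (x : X) (y₁ y₂ : Y) :
    D (x, y₁) / p (x, y₁) = D (x, y₂) / p (x, y₂) := by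
  classical
  have hlocal : IsLocalMin (fun t : ℝ => xentLoss (p + t • IsCondModel.transfer x y₁ y₂) D) 0 := by
    filter_upwards [Metric.ball_mem_nhds (0 : ℝ) (lt_min (hp.1 (x, y₁)) (hp.1 (x, y₂)))]
      with t ht
    rw [Metric.mem_ball, Real.dist_eq, sub_zero] at ht
    simpa using isMinOn_iff.1 hmin _ (hp.add_smul_transfer x y₁ y₂ ht)
  have hcrit := hlocal.hasDerivAt_eq_zero (hasDerivAt_xentLoss_add_smul hp.1 _ D)
  simpa only [IsCondModel.transfer, Pi.sub_apply, Pi.single_apply, mul_sub, sub_div, mul_ite,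
    mul_one, mul_zero, sum_sub_distrib, ite_div, zero_div, sum_ite_eq', mem_univ, if_true,
    neg_eq_zero, sub_eq_zero] using hcrit

lemma mul_marginal_eq_of_isMinOn (x : X) (y : Y) : p (x, y) * marginal D x = D (x, y) := by
  have hratio : ∀ y', D (x, y') = D (x, y) / p (x, y) * p (x, y') := fun y' => by
    rw [← div_eq_div_of_isMinOn hp hmin x y' y, div_mul_cancel₀ _ (hp.1 _).ne']
  rw [marginal, sum_congr rfl fun y' _ => hratio y', ← mul_sum, hp.2 x, mul_one,
    mul_div_cancel₀ _ (hp.1 _).ne']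

end Minimizer

theorem mixture_minimizer_eq_weighted_experts_general
    {X Y : Type*} [Fintype X] [Fintype Y]
    {k : ℕ} (D : Fin k → X × Y → ℝ)
    (hD0 : ∀ i q, 0 ≤ D i q)
    (w : Fin k → ℝ)
    (pmix : X × Y → ℝ) (hpmix : IsCondModel pmix)
    (hpmixMin : ∀ q : X × Y → ℝ, IsCondModel q →
      xentLoss pmix (fun r => ∑ i, w i * D i r) ≤ xentLoss q (fun r => ∑ i, w i * D i r))
    (pexp : Fin k → X × Y → ℝ) (hpexp : ∀ i, IsCondModel (pexp i))
    (hpexpMin : ∀ i, ∀ q : X × Y → ℝ, IsCondModel q →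
      xentLoss (pexp i) (D i) ≤ xentLoss q (D i)) :
    ∀ x : X, 0 < marginal (fun r => ∑ i, w i * D i r) x → ∀ y : Y,
      pmix (x, y) =
        ∑ i ∈ Finset.univ.filter (fun i => 0 < marginal (D i) x),
          (w i * marginal (D i) x / ∑ j, w j * marginal (D j) x) * pexp i (x, y) := by
  intro x hx y
  have hmix := mul_marginal_eq_of_isMinOn hpmix (isMinOn_iff.2 hpmixMin) x y
  have hexp i := mul_marginal_eq_of_isMinOn (hpexp i) (isMinOn_iff.2 (hpexpMin i)) x y
  rw [marginal_sum_mul] at hx hmix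
  have hsupport : ∀ i ∈ univ, (w i * marginal (D i) x / ∑ j, w j * marginal (D j) x)
      * pexp i (x, y) ≠ 0 → 0 < marginal (D i) x := fun i _ hi =>
    (marginal_nonneg (hD0 i) x).lt_of_ne' fun h => hi (by simp [h])
  rw [sum_filter_of_ne hsupport, (eq_div_iff_mul_eq hx.ne').2 hmix, sum_div]
  refine sum_congr rfl fun i _ => ?_
  rw [← hexp i]
  ring

/-- Proposition 1 (finite form): the minimizer of the `λ`-weighted pre-training loss is, on
the support of the mixture, the `λ'(x)`-weighted combination of the per-domain minimizers. -/
theorem mixture_minimizer_eq_weighted_experts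
    {X Y : Type*} [Fintype X] [Fintype Y] [Nonempty X] [Nonempty Y]
    {k : ℕ} (D : Fin k → X × Y → ℝ)
    (hD0 : ∀ i q, 0 ≤ D i q) (hD1 : ∀ i, ∑ q : X × Y, D i q = 1)
    (w : Fin k → ℝ) (hw0 : ∀ i, 0 ≤ w i) (hw1 : ∑ i, w i = 1)
    (pmix : X × Y → ℝ) (hpmix : IsCondModel pmix)
    (hpmixMin : ∀ q : X × Y → ℝ, IsCondModel q →
      xentLoss pmix (fun r => ∑ i, w i * D i r) ≤ xentLoss q (fun r => ∑ i, w i * D i r))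
    (pexp : Fin k → X × Y → ℝ) (hpexp : ∀ i, IsCondModel (pexp i))
    (hpexpMin : ∀ i, ∀ q : X × Y → ℝ, IsCondModel q →
      xentLoss (pexp i) (D i) ≤ xentLoss q (D i)) :
    ∀ x : X, 0 < marginal (fun r => ∑ i, w i * D i r) x → ∀ y : Y,
      pmix (x, y) =
        ∑ i ∈ Finset.univ.filter (fun i => 0 < marginal (D i) x),
          (w i * marginal (D i) x / ∑ j, w j * marginal (D j) x) * pexp i (x, y) :=
  mixture_minimizer_eq_weighted_experts_general D hD0 w pmix hpmix hpmixMin pexp hpexp hpexpMin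
end

section
/- (Proposition 1, equal-marginals corollary.) Let X and Y be finite nonempty types, let D_1, …, D_k be probability distributions on X × Y with identical x-marginals (D_i(x) = D_j(x) for all i, j, x), and let λ be in the (k−1)-simplex. Suppose p*_λ minimizes L(·, D_λ) over conditional models and each p*_i minimizes L(·, D_i) over conditional models. Then for every x with D_λ(x) > 0 and every y ∈ Y, p*_λ(y|x) = Σ_{i : D_i(x) > 0} λ_i · p*_i(y|x): the optimal model for the mixture is exactly the λ-weighted ensemble of the data experts (the MDE approximation with weights λ). -/
open Finset

lemma minimizer_eq_conditional {X Y : Type*} [Fintype X] [Fintype Y] [Nonempty Y]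
    (D : X × Y → ℝ) (hD0 : ∀ q, 0 ≤ D q)
    (p : X × Y → ℝ) (hp : IsCondModel p)
    (hmin : ∀ q : X × Y → ℝ, IsCondModel q → xentLoss p D ≤ xentLoss q D) :
    ∀ x : X, 0 < marginal D x → ∀ y : Y, p (x, y) = D (x, y) / marginal D x := by
  classical
  set u : ℝ := (Fintype.card Y : ℝ)⁻¹ with hu_def
  have hcard : 0 < (Fintype.card Y : ℝ) := by
    exact_mod_cast Fintype.card_pos
  have hu : 0 < u := inv_pos.mpr hcard
  have hcu : (Fintype.card Y : ℝ) * u = 1 := mul_inv_cancel₀ (ne_of_gt hcard)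
  set c : X × Y → ℝ := fun q => if 0 < marginal D q.1 then D q / marginal D q.1 else u
    with hc_def
  have hc0 : ∀ q, 0 ≤ c q := by
    intro q
    by_cases h : 0 < marginal D q.1
    · simp only [hc_def, if_pos h]
      exact div_nonneg (hD0 q) h.le
    · simp only [hc_def, if_neg h]
      exact hu.le
  have hcsum : ∀ x : X, ∑ y, c (x, y) = 1 := by
    intro x
    by_cases h : 0 < marginal D x
    · simp only [hc_def, if_pos h]
      rw [← Finset.sum_div]
      exact div_self (ne_of_gt h)
    · simp only [hc_def, if_neg h]
      rw [Finset.sum_const, nsmul_eq_mul, Finset.card_univ, hcu]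

  -- Step 1: the loss of p is at most the "entropy" value  ∑ -(D q * log (c q))
  have h1 : xentLoss p D ≤ ∑ q : X × Y, -(D q * Real.log (c q)) := by
    have hmem : Set.Ioo (0:ℝ) 1 ∈ nhdsWithin (0:ℝ) (Set.Ioi 0) :=
      Ioo_mem_nhdsGT_of_mem ⟨le_refl 0, zero_lt_one⟩
    refine ge_of_tendsto
      (f := fun ε : ℝ => xentLoss (fun q => (1 - ε) * c q + ε * u) D)
      (x := nhdsWithin (0:ℝ) (Set.Ioi 0)) ?_ ?_
    · -- tendsto
      have hper : ∀ q : X × Y,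
          Filter.Tendsto (fun ε : ℝ => -(D q * Real.log ((1 - ε) * c q + ε * u)))
            (nhdsWithin (0:ℝ) (Set.Ioi 0)) (nhds (-(D q * Real.log (c q)))) := by
        intro q
        by_cases hq : D q = 0
        · simp [hq]
        · have hDq : 0 < D q := lt_of_le_of_ne (hD0 q) (Ne.symm hq)
          have hm : 0 < marginal D q.1 := by
            have := Finset.single_le_sum (f := fun y => D (q.1, y))
              (fun y _ => hD0 (q.1, y)) (Finset.mem_univ q.2)
            exact lt_of_lt_of_le hDq (by simpa [marginal] using this)
          have hcq : 0 < c q := by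
            simp only [hc_def, if_pos hm]
            exact div_pos hDq hm
          have hfun : Filter.Tendsto (fun ε : ℝ => (1 - ε) * c q + ε * u)
              (nhds 0) (nhds (c q)) := by
            have hcont : Continuous (fun ε : ℝ => (1 - ε) * c q + ε * u) := by continuity
            have := hcont.tendsto 0
            simpa using this
          have hlog := ((Real.continuousAt_log hcq.ne').tendsto).comp hfun
          exact (((tendsto_const_nhds (x := D q)).mul hlog).neg).mono_left
            nhdsWithin_le_nhds
      have := tendsto_finset_sum Finset.univ (fun q _ => hper q)
      refine this.congr (fun ε => ?_)
      simp [xentLoss]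
    · filter_upwards [hmem] with ε hε
      apply hmin
      constructor
      · intro q
        have h1 : 0 ≤ (1 - ε) * c q := mul_nonneg (by linarith [hε.2]) (hc0 q)
        have h2 : 0 < ε * u := mul_pos hε.1 hu
        simpa using add_pos_of_nonneg_of_pos h1 h2
      · intro x
        rw [Finset.sum_add_distrib, ← Finset.mul_sum, hcsum, Finset.sum_const,
          nsmul_eq_mul, Finset.card_univ]
        linear_combination ε * hcu
  -- Step 2: per-x Gibbs inequality and equality analysis
  have hterm : ∀ x : X, 0 < marginal D x → ∀ y : Y,
      D (x, y) * Real.log (p (x, y)) - D (x, y) * Real.log (c (x, y)) ≤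
        marginal D x * p (x, y) - D (x, y) := by
    intro x hm y
    by_cases ha : D (x, y) = 0
    · simp only [ha, zero_mul, sub_zero, sub_self]
      exact mul_nonneg hm.le (hp.1 (x, y)).le
    · have haD : 0 < D (x, y) := lt_of_le_of_ne (hD0 _) (Ne.symm ha)
      have hc_eq : c (x, y) = D (x, y) / marginal D x := by
        simp only [hc_def]
        rw [if_pos hm]
      have hppos : 0 < p (x, y) := hp.1 (x, y)
      set t : ℝ := p (x, y) * marginal D x / D (x, y) with ht
      have htpos : 0 < t := by positivity
      have hlog : Real.log t ≤ t - 1 := Real.log_le_sub_one_of_pos htpos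
      have hlog_eq : Real.log (p (x, y)) - Real.log (c (x, y)) = Real.log t := by
        rw [hc_eq, ht, Real.log_div (by positivity) ha,
          Real.log_div ha (ne_of_gt hm), Real.log_mul (ne_of_gt hppos) (ne_of_gt hm)]
        ring
      have lhs_eq : D (x, y) * Real.log (p (x, y)) - D (x, y) * Real.log (c (x, y))
          = D (x, y) * Real.log t := by rw [← mul_sub, hlog_eq]
      have key : D (x, y) * Real.log t ≤ D (x, y) * (t - 1) :=
        mul_le_mul_of_nonneg_left hlog (hD0 _)
      have expand : D (x, y) * (t - 1) = marginal D x * p (x, y) - D (x, y) := by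
        rw [ht]; field_simp
      linarith
  have hrhs : ∀ x : X, ∑ y, (marginal D x * p (x, y) - D (x, y)) = 0 := by
    intro x
    rw [Finset.sum_sub_distrib, ← Finset.mul_sum, hp.2 x]
    simp [marginal]
  set g : X → ℝ :=
    fun x => ∑ y, (D (x, y) * Real.log (p (x, y)) - D (x, y) * Real.log (c (x, y)))
    with hg_def
  have hg_le : ∀ x : X, g x ≤ 0 := by
    intro x
    by_cases hm : 0 < marginal D x
    · have h := Finset.sum_le_sum (s := Finset.univ) (fun y _ => hterm x hm y)
      rw [hrhs x] at h
      exact h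
    · have hm0 : marginal D x = 0 :=
        le_antisymm (not_lt.mp hm) (Finset.sum_nonneg fun y _ => hD0 (x, y))
      have hz : ∀ y, D (x, y) = 0 := by
        intro y
        have := (Finset.sum_eq_zero_iff_of_nonneg (fun y _ => hD0 (x, y))).mp hm0
        exact this y (Finset.mem_univ y)
      simp [hg_def, hz]
  have hsum_g : 0 ≤ ∑ x : X, g x := by
    have e1 : ∑ x : X, g x =
        (∑ q : X × Y, D q * Real.log (p q)) - ∑ q : X × Y, D q * Real.log (c q) := by
      rw [Fintype.sum_prod_type, Fintype.sum_prod_type, ← Finset.sum_sub_distrib]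
      simp [hg_def, Finset.sum_sub_distrib]
    have e2 : ∑ q : X × Y, -(D q * Real.log (c q)) = -∑ q : X × Y, D q * Real.log (c q) := by
      rw [Finset.sum_neg_distrib]
    simp only [xentLoss] at h1
    rw [e2] at h1
    linarith [e1, h1]
  have hg0 : ∀ x : X, g x = 0 := by
    intro x
    by_contra hne
    have hlt : g x < 0 := lt_of_le_of_ne (hg_le x) hne
    have : ∑ x' : X, g x' < ∑ _x' : X, (0 : ℝ) :=
      Finset.sum_lt_sum (fun i _ => hg_le i) ⟨x, Finset.mem_univ x, hlt⟩
    simp at this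
    linarith
  -- conclude
  intro x hm y
  have hterms_eq : ∀ y' : Y,
      marginal D x * p (x, y') - D (x, y') -
        (D (x, y') * Real.log (p (x, y')) - D (x, y') * Real.log (c (x, y'))) = 0 := by
    have hsum0 : ∑ y', (marginal D x * p (x, y') - D (x, y') -
        (D (x, y') * Real.log (p (x, y')) - D (x, y') * Real.log (c (x, y')))) = 0 := by
      rw [Finset.sum_sub_distrib, hrhs x]
      have := hg0 x
      rw [hg_def] at this
      simp only at this
      rw [this]
      ring
    intro y'
    have := (Finset.sum_eq_zero_iff_of_nonneg
      (fun y' _ => sub_nonneg.mpr (hterm x hm y'))).mp hsum0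
    exact this y' (Finset.mem_univ y')
  have heq := hterms_eq y
  by_cases ha : D (x, y) = 0
  · exfalso
    have hppos : 0 < p (x, y) := hp.1 (x, y)
    rw [ha] at heq
    simp at heq
    rcases heq with h | h
    · linarith
    · linarith
  · have haD : 0 < D (x, y) := lt_of_le_of_ne (hD0 _) (Ne.symm ha)
    have hppos : 0 < p (x, y) := hp.1 (x, y)
    have hc_eq : c (x, y) = D (x, y) / marginal D x := by
      simp only [hc_def]; rw [if_pos hm]
    set t : ℝ := p (x, y) * marginal D x / D (x, y) with ht
    have htpos : 0 < t := by positivity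
    have hlog_eq : Real.log (p (x, y)) - Real.log (c (x, y)) = Real.log t := by
      rw [hc_eq, ht, Real.log_div (by positivity) ha,
        Real.log_div ha (ne_of_gt hm), Real.log_mul (ne_of_gt hppos) (ne_of_gt hm)]
      ring
    have lhs_eq : D (x, y) * Real.log (p (x, y)) - D (x, y) * Real.log (c (x, y))
        = D (x, y) * Real.log t := by rw [← mul_sub, hlog_eq]
    have expand : D (x, y) * (t - 1) = marginal D x * p (x, y) - D (x, y) := by
      rw [ht]; field_simp
    have heq2 : D (x, y) * Real.log t = D (x, y) * (t - 1) := by linarith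
    have hlogt : Real.log t = t - 1 := mul_left_cancel₀ ha heq2
    have ht1 : t = 1 := by
      by_contra hne
      exact absurd hlogt (ne_of_lt (Real.log_lt_sub_one_of_pos htpos hne))
    rw [ht] at ht1
    field_simp at ht1
    field_simp
    linarith

/-- Proposition 1 (equal-marginals corollary): with identical x-marginals, the optimal model
for the mixture is exactly the `λ`-weighted ensemble of the data experts. -/
theorem mixture_minimizer_eq_mde_ensemble
    {X Y : Type*} [Fintype X] [Fintype Y] [Nonempty X] [Nonempty Y]
    {k : ℕ} (D : Fin k → X × Y → ℝ)
    (hD0 : ∀ i q, 0 ≤ D i q) (hD1 : ∀ i, ∑ q : X × Y, D i q = 1)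
    (hmarg : ∀ i j, ∀ x : X, marginal (D i) x = marginal (D j) x)
    (w : Fin k → ℝ) (hw0 : ∀ i, 0 ≤ w i) (hw1 : ∑ i, w i = 1)
    (pmix : X × Y → ℝ) (hpmix : IsCondModel pmix)
    (hpmixMin : ∀ q : X × Y → ℝ, IsCondModel q →
      xentLoss pmix (fun r => ∑ i, w i * D i r) ≤ xentLoss q (fun r => ∑ i, w i * D i r))
    (pexp : Fin k → X × Y → ℝ) (hpexp : ∀ i, IsCondModel (pexp i))
    (hpexpMin : ∀ i, ∀ q : X × Y → ℝ, IsCondModel q →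
      xentLoss (pexp i) (D i) ≤ xentLoss q (D i)) :
    ∀ x : X, 0 < marginal (fun r => ∑ i, w i * D i r) x → ∀ y : Y,
      pmix (x, y) =
        ∑ i ∈ Finset.univ.filter (fun i => 0 < marginal (D i) x),
          w i * pexp i (x, y) := by
  classical
  intro x hx y
  have hk : Nonempty (Fin k) := by
    rcases Nat.eq_zero_or_pos k with h | h
    · exfalso; subst h; simp at hw1
    · exact ⟨⟨0, h⟩⟩
  obtain ⟨i0⟩ := hk
  have hDmmarg : ∀ x' : X,
      marginal (fun r => ∑ i, w i * D i r) x' = marginal (D i0) x' := by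
    intro x'
    have : marginal (fun r => ∑ i, w i * D i r) x'
        = ∑ i, w i * marginal (D i) x' := by
      simp only [marginal, Finset.mul_sum]
      rw [Finset.sum_comm]
    rw [this]
    have : ∀ i, w i * marginal (D i) x' = w i * marginal (D i0) x' := by
      intro i; rw [hmarg i i0]
    rw [Finset.sum_congr rfl (fun i _ => this i), ← Finset.sum_mul, hw1, one_mul]
  have hmpos : ∀ i, 0 < marginal (D i) x := by
    intro i
    rw [hmarg i i0, ← hDmmarg x]
    exact hx
  have hfilter : Finset.univ.filter (fun i => 0 < marginal (D i) x) = Finset.univ :=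
    Finset.filter_true_of_mem (fun i _ => hmpos i)
  rw [hfilter]
  have hDm0 : ∀ q, 0 ≤ ∑ i, w i * D i q :=
    fun q => Finset.sum_nonneg fun i _ => mul_nonneg (hw0 i) (hD0 i q)
  have hpm := minimizer_eq_conditional (fun r => ∑ i, w i * D i r) hDm0
    pmix hpmix hpmixMin x hx y
  have hpe : ∀ i, pexp i (x, y) = D i (x, y) / marginal (D i) x :=
    fun i => minimizer_eq_conditional (D i) (hD0 i) (pexp i) (hpexp i)
      (hpexpMin i) x (hmpos i) y
  rw [hpm, hDmmarg x, Finset.sum_div]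
  refine Finset.sum_congr rfl (fun i _ => ?_)
  rw [hpe i, hmarg i i0]
  ring
end
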